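/- arXiv:2406.03281 — 2 statements merged into one kernel-verified Lean document; each statement's English description precedes it below -/
import Mathlib

section
/- Let T ⊂ 𝕋^d be a finite sampling set such that the Fourier matrix F(T, M(I)) = (e^{2πih·t})_{t∈T, h∈M(I)} has trivial kernel (i.e., T is a spatial discretization of the span of trigonometric monomials indexed by M(I)). Then the cosine transformed set X = {cos(2πt) : t ∈ T} is a spatial discretization of the span of Chebyshev polynomials indexed by I, i.e., the Chebyshev matrix C(X,I) = (T_k(x))_{x∈X,k∈I} has full column rank |I|. -/
/-!
Substituting `x = cos 2πt` turns each Chebyshev polynomial into a trigonometric polynomial whose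
frequencies are exactly the mirror images of its index: `T_k(cos 2πt) = ∑_{h ∈ M({k})} w(h)
e^{2πi h·t}` with `w(h) = (√2/2)^{#{j : h_j ≠ 0}} ≠ 0`. So if `C(X,I) c = 0`, spreading `c_k`
over `M({k})` with the weights `w` gives a vector in the kernel of `F(T,M(I))`, hence zero;
since the sets `M({k})` are pairwise disjoint, every `c_k` vanishes.
-/

open Real Complex

/-- The normalized `d`-variate Chebyshev polynomial. -/
noncomputable def chebT {d : ℕ} (k : Fin d → ℕ) (x : Fin d → ℝ) : ℝ :=
  ∏ j, if k j = 0 then 1 else Real.sqrt 2 * Real.cos (k j * Real.arccos (x j))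

/-- The mirror set `M({k})` of a single multi-index. -/
def mirror {d : ℕ} (k : Fin d → ℕ) : Finset (Fin d → ℤ) :=
  Finset.image (fun l : Fin d → Bool => fun j => if l j then (k j : ℤ) else -(k j : ℤ))
    Finset.univ

/-- The mirrored index set `M(I) = ⋃_{k ∈ I} M({k})`. -/
def mirrorSet {d : ℕ} (I : Finset (Fin d → ℕ)) : Finset (Fin d → ℤ) :=
  I.biUnion mirror

/-- The Chebyshev sampling matrix `C(X,I) = (T_k(x))_{x∈X,k∈I}`. -/
noncomputable def chebMatrix {d : ℕ} (X : Finset (Fin d → ℝ)) (I : Finset (Fin d → ℕ)) :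
    Matrix {x // x ∈ X} {k // k ∈ I} ℝ :=
  fun x k => chebT (k : Fin d → ℕ) (x : Fin d → ℝ)

/-- The Fourier sampling matrix `F(T,J) = (e^{2πi h·t})_{t∈T,h∈J}`. -/
noncomputable def fourierMatrix {d : ℕ} (T : Finset (Fin d → ℝ)) (J : Finset (Fin d → ℤ)) :
    Matrix {t // t ∈ T} {h // h ∈ J} ℂ :=
  fun t h => Complex.exp (2 * Real.pi * Complex.I * ∑ j, ((h : Fin d → ℤ) j : ℂ) * ((t : Fin d → ℝ) j : ℂ))
theorem Matrix.rank_eq_card_of_ker_mulVecLin_eq_bot {m n R : Type*} [Fintype n] [CommRing R]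
    [StrongRankCondition R] (A : Matrix m n R) (h : LinearMap.ker A.mulVecLin = ⊥) :
    A.rank = Fintype.card n := by
  rw [Matrix.rank, LinearMap.finrank_range_of_inj (LinearMap.ker_eq_bot.mp h),
    Module.finrank_fintype_fun_eq_card]

lemma cos_nat_mul_arccos_cos (n : ℕ) (θ : ℝ) :
    Real.cos (n * Real.arccos (Real.cos θ)) = Real.cos (n * θ) := by
  have h := Polynomial.Chebyshev.T_real_cos (Real.arccos (Real.cos θ)) n
  rw [Real.cos_arccos (Real.neg_one_le_cos θ) (Real.cos_le_one θ),
    Polynomial.Chebyshev.T_real_cos, Int.cast_natCast] at h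
  exact h.symm

lemma mirror_eq_piFinset {d : ℕ} (k : Fin d → ℕ) :
    mirror k = Fintype.piFinset fun j => ({(k j : ℤ), -(k j : ℤ)} : Finset ℤ) := by
  ext h
  simp only [mirror, Finset.mem_image, Finset.mem_univ, true_and, Fintype.mem_piFinset,
    Finset.mem_insert, Finset.mem_singleton]
  constructor
  · rintro ⟨l, rfl⟩ j
    cases hl : l j <;> simp [hl]
  · intro hh
    refine ⟨fun j => decide (h j = k j), funext fun j => ?_⟩
    rcases hh j with hj | hj <;> by_cases hk : h j = k j <;> simp [hk] <;> omega

lemma natAbs_of_mem_mirror {d : ℕ} {k : Fin d → ℕ} {h : Fin d → ℤ} (hh : h ∈ mirror k) :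
    (fun j => (h j).natAbs) = k := by
  rw [mirror_eq_piFinset, Fintype.mem_piFinset] at hh
  funext j
  rcases Finset.mem_insert.mp (hh j) with hj | hj
  · simp [hj]
  · simp [Finset.mem_singleton.mp hj]

lemma self_mem_mirror {d : ℕ} (k : Fin d → ℕ) : (fun j => (k j : ℤ)) ∈ mirror k := by
  simp [mirror_eq_piFinset]

lemma natCast_mem_mirrorSet {d : ℕ} {I : Finset (Fin d → ℕ)} {k : Fin d → ℕ} (hk : k ∈ I) :
    (fun j => (k j : ℤ)) ∈ mirrorSet I :=
  Finset.mem_biUnion.mpr ⟨k, hk, self_mem_mirror k⟩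

lemma pairwiseDisjoint_mirror {d : ℕ} (S : Set (Fin d → ℕ)) : S.PairwiseDisjoint mirror :=
  fun _ _ _ _ hne => Finset.disjoint_left.mpr fun _ h₁ h₂ =>
    hne ((natAbs_of_mem_mirror h₁).symm.trans (natAbs_of_mem_mirror h₂))

lemma natAbs_mem_of_mem_mirrorSet {d : ℕ} {I : Finset (Fin d → ℕ)} {h : Fin d → ℤ}
    (hh : h ∈ mirrorSet I) : (fun j => (h j).natAbs) ∈ I := by
  obtain ⟨k, hk, hhk⟩ := Finset.mem_biUnion.mp hh
  rwa [natAbs_of_mem_mirror hhk]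

noncomputable def mirrorWeight (m : ℤ) : ℂ := if m = 0 then 1 else (Real.sqrt 2 / 2 : ℝ)

lemma mirrorWeight_ne_zero (m : ℤ) : mirrorWeight m ≠ 0 := by
  unfold mirrorWeight
  split_ifs
  · exact one_ne_zero
  · exact Complex.ofReal_ne_zero.mpr (by positivity)

lemma sum_mirrorWeight_mul_exp (n : ℕ) (s : ℝ) :
    ∑ m ∈ ({(n : ℤ), -(n : ℤ)} : Finset ℤ),
        mirrorWeight m * Complex.exp (2 * π * Complex.I * m * s) =
      ((if n = 0 then 1 else Real.sqrt 2 * Real.cos (n * Real.arccos (Real.cos (2 * π * s))) : ℝ) :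
        ℂ) := by
  rcases eq_or_ne n 0 with rfl | hn
  · simp [mirrorWeight]
  have hn' : (n : ℤ) ≠ 0 := by exact_mod_cast hn
  rw [Finset.sum_pair (by omega), if_neg hn, cos_nat_mul_arccos_cos, mirrorWeight, mirrorWeight,
    if_neg hn', if_neg (neg_ne_zero.mpr hn')]
  have e₁ : 2 * π * Complex.I * ((n : ℤ) : ℂ) * s = ((n * (2 * π * s) : ℝ) : ℂ) * Complex.I := by
    push_cast; ring
  have e₂ : 2 * π * Complex.I * ((-(n : ℤ) : ℤ) : ℂ) * s =
      -((n * (2 * π * s) : ℝ) : ℂ) * Complex.I := by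
    push_cast; ring
  rw [e₁, e₂, ← mul_add, ← Complex.two_cos]
  push_cast
  ring

lemma sum_mirror_mul_exp_eq_chebT {d : ℕ} (k : Fin d → ℕ) (t : Fin d → ℝ) :
    ∑ h ∈ mirror k, (∏ j, mirrorWeight (h j)) *
        Complex.exp (2 * π * Complex.I * ∑ j, (h j : ℂ) * (t j : ℂ)) =
      chebT k (fun j => Real.cos (2 * π * t j)) := by
  have hfactor : ∀ h : Fin d → ℤ, (∏ j, mirrorWeight (h j)) *
      Complex.exp (2 * π * Complex.I * ∑ j, (h j : ℂ) * (t j : ℂ)) =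
        ∏ j, mirrorWeight (h j) * Complex.exp (2 * π * Complex.I * h j * t j) := by
    intro h
    simp only [Finset.mul_sum, Complex.exp_sum, ← Finset.prod_mul_distrib, mul_assoc]
  simp only [hfactor, mirror_eq_piFinset, chebT, Complex.ofReal_prod]
  rw [← Finset.prod_univ_sum (fun j => ({(k j : ℤ), -(k j : ℤ)} : Finset ℤ))
    (fun j m => mirrorWeight m * Complex.exp (2 * π * Complex.I * m * t j))]
  exact Finset.prod_congr rfl fun j _ => sum_mirrorWeight_mul_exp (k j) (t j)

noncomputable def mirrorLift {d : ℕ} (I : Finset (Fin d → ℕ)) (c : {k // k ∈ I} → ℝ)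
    (h : Fin d → ℤ) : ℂ :=
  (if hk : (fun j => (h j).natAbs) ∈ I then (c ⟨_, hk⟩ : ℂ) else 0) * ∏ j, mirrorWeight (h j)

lemma mirrorLift_of_mem_mirror {d : ℕ} {I : Finset (Fin d → ℕ)} (c : {k // k ∈ I} → ℝ)
    {k : Fin d → ℕ} (hk : k ∈ I) {h : Fin d → ℤ} (hh : h ∈ mirror k) :
    mirrorLift I c h = c ⟨k, hk⟩ * ∏ j, mirrorWeight (h j) := by
  simp only [mirrorLift, natAbs_of_mem_mirror hh, dif_pos hk]

lemma fourierMatrix_mulVec_mirrorLift {d : ℕ} (T : Finset (Fin d → ℝ)) (I : Finset (Fin d → ℕ))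
    (c : {k // k ∈ I} → ℝ) (t : {t // t ∈ T}) :
    (fourierMatrix T (mirrorSet I)).mulVec (fun h => mirrorLift I c h) t =
      ∑ k : {k // k ∈ I}, chebT k (fun j => Real.cos (2 * π * t.1 j)) * c k := by
  simp only [Matrix.mulVec, dotProduct, fourierMatrix]
  rw [Finset.sum_coe_sort (mirrorSet I) fun h =>
      Complex.exp (2 * π * Complex.I * ∑ j, (h j : ℂ) * (t.1 j : ℂ)) * mirrorLift I c h,
    mirrorSet, Finset.sum_biUnion (pairwiseDisjoint_mirror _), ← Finset.sum_coe_sort I,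
    Complex.ofReal_sum]
  refine Finset.sum_congr rfl fun k _ => ?_
  rw [Complex.ofReal_mul, ← sum_mirror_mul_exp_eq_chebT, Finset.sum_mul]
  refine Finset.sum_congr rfl fun h hh => ?_
  rw [mirrorLift_of_mem_mirror c k.2 hh]
  ring

lemma eq_zero_of_mirrorLift_eq_zero {d : ℕ} {I : Finset (Fin d → ℕ)} {c : {k // k ∈ I} → ℝ}
    (hc : (fun h : {h // h ∈ mirrorSet I} => mirrorLift I c h) = 0) : c = 0 := by
  funext k
  have hk := congrFun hc ⟨fun j => (k.1 j : ℤ), natCast_mem_mirrorSet k.2⟩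
  rw [Pi.zero_apply, mirrorLift_of_mem_mirror c k.2 (self_mem_mirror k.1)] at hk
  have hweight : ∏ j, mirrorWeight (k.1 j) ≠ 0 :=
    Finset.prod_ne_zero_iff.mpr fun j _ => mirrorWeight_ne_zero _
  exact_mod_cast (mul_eq_zero.mp hk).resolve_right hweight

/-- Theorem `spatial_discr_per`: if the Fourier matrix `F(T,M(I))` has
trivial kernel, then the cosine transformed set `X = Cos(T)` is a spatial discretization
of the span of Chebyshev polynomials indexed by `I`, i.e. `C(X,I)` has full column rank. -/
theorem stmt_9 {d : ℕ} (T : Finset (Fin d → ℝ)) (X : Finset (Fin d → ℝ))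
    (I : Finset (Fin d → ℕ))
    (hX : X = @Finset.image _ _ (Classical.decEq _)
      (fun t : Fin d → ℝ => fun j => Real.cos (2 * Real.pi * t j)) T)
    (hker : LinearMap.ker (fourierMatrix T (mirrorSet I)).mulVecLin = ⊥) :
    (chebMatrix X I).rank = I.card := by
  have hcos_mem : ∀ t ∈ T, (fun j => Real.cos (2 * π * t j)) ∈ X := fun t ht =>
    hX ▸ @Finset.mem_image_of_mem _ _ (Classical.decEq _) _ _ _ ht
  rw [Matrix.rank_eq_card_of_ker_mulVecLin_eq_bot, Fintype.card_coe]
  rw [Matrix.ker_mulVecLin_eq_bot_iff] at hker ⊢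
  intro c hc
  refine eq_zero_of_mirrorLift_eq_zero (hker _ (funext fun t => ?_))
  rw [fourierMatrix_mulVec_mirrorLift, Pi.zero_apply]
  exact_mod_cast congrFun hc ⟨_, hcos_mem t t.2⟩
end

section
/- Under the assumptions of the multiple-lattice construction (c > 1, δ ∈ (0,1], prime M ≥ c(|M(I)|-1) with mod-M injective on M(I), L ≥ ⌈(c/(c-1))²(ln|I| - ln δ)/2⌉ i.i.d. uniform generating vectors z₁,...,z_L ∈ {0,...,M-1}^d), the probability that the Chebyshev matrix C(X, I) with X = ⋃_{ℓ=1}^L {cos(2π t) : t ∈ Λ(z_ℓ, M)} has full column rank |I| is at least 1 - δ. -/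
open Real

/-- The union of cosine transformed rank-1 lattices
`⋃_ℓ Cos(Λ(z_ℓ,M)) = ⋃_ℓ {cos(2π(j/M)z_ℓ) : j = 0,…,M-1}` as a finite sampling set. -/
noncomputable def cosLattices {d : ℕ} (L M : ℕ) (zs : Fin L → Fin d → Fin M) :
    Finset (Fin d → ℝ) :=
  @Finset.image _ _ (Classical.decEq _)
    (fun p : Fin L × Fin M =>
      fun i : Fin d => Real.cos (2 * Real.pi * ((p.2 : ℕ) : ℝ) / (M : ℝ) * ((zs p.1 i : ℕ) : ℝ)))
    Finset.univ

/-!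
On the cosine transform of a rank-1 lattice, `x_j = cos(2π j z / M)`, each factor
`√2 cos(k_i arccos x_{j,i})` splits into two exponentials, so `T_k(x_j)` is a combination of the
characters `j ↦ e(j ⟨h, z⟩ / M)` with `h ∈ M({k})`. Pairing the rows with the character of
frequency `⟨k, z⟩` therefore isolates column `k` as soon as no `h ∈ M(I) \ M({k})` has
`⟨h, z⟩ ≡ ⟨k, z⟩ mod M`, and the matrix has full column rank once every `k ∈ I` is
non-aliased on one of the lattices.

For prime `M` each congruence `⟨h - k, z⟩ ≡ 0` with `h ≢ k mod M` cuts out at most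
`M^(d-1)` vectors `z`, so `k` is aliased for at most `(|M(I)| - 1) M^(d-1) ≤ M^d / c` of them, and
on all `L` independent lattices with probability at most `c^(-L)`. A union bound over `I` leaves
`|I| c^(-L)`, which is at most `δ` by the choice of `L` and `log c ≥ 2 (1 - 1/c)²`.
-/

open Finset Matrix

theorem Matrix.rank_eq_card_of_forall_exists_separating {m n ι K : Type*} [Fintype n]
    [Fintype ι] [Field K] (A : Matrix m n K)
    (h : ∀ k, ∃ (r : ι → m) (c : ι → K),
      ∑ i, c i * A (r i) k ≠ 0 ∧ ∀ k' ≠ k, ∑ i, c i * A (r i) k' = 0) :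
    A.rank = Fintype.card n := by
  suffices Function.Injective A.mulVecLin by
    rw [Matrix.rank, LinearMap.finrank_range_of_inj this, Module.finrank_fintype_fun_eq_card]
  rw [← LinearMap.ker_eq_bot, LinearMap.ker_eq_bot']
  intro v hv
  funext k
  obtain ⟨r, c, hk, hk'⟩ := h k
  have hcomb : ∑ i, c i * (A *ᵥ v) (r i) = (∑ i, c i * A (r i) k) * v k := by
    simp only [mulVec, dotProduct, mul_sum, ← mul_assoc]
    rw [sum_comm, sum_eq_single k (fun k' _ hne => by rw [← sum_mul, hk' k' hne, zero_mul])
      (by simp), sum_mul]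
  have hAv : A *ᵥ v = 0 := hv
  simpa [hAv, hk] using hcomb.symm

theorem AddChar.map_sum_eq_prod {A R ι : Type*} [AddCommMonoid A] [CommMonoid R]
    (ψ : AddChar A R) (s : Finset ι) (f : ι → A) : ψ (∑ i ∈ s, f i) = ∏ i ∈ s, ψ (f i) :=
  map_prod ψ.toMonoidHom (fun i => Multiplicative.ofAdd (f i)) s

theorem card_pow_sub_sum_le_card_filter_forall_exists {ι α : Type*} [Fintype α]
    [DecidableEq α] (s : Finset ι) (P : ι → α → Prop) [∀ k, DecidablePred (P k)] (L : ℕ) :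
    (Fintype.card α : ℝ) ^ L - ∑ k ∈ s, (#{a | ¬ P k a} : ℝ) ^ L ≤
      #{f : Fin L → α | ∀ k ∈ s, ∃ ℓ, P k (f ℓ)} := by
  have hbad : #{f : Fin L → α | ¬ ∀ k ∈ s, ∃ ℓ, P k (f ℓ)} ≤ ∑ k ∈ s, #{a | ¬ P k a} ^ L := by
    calc _ ≤ #(s.biUnion fun k => Fintype.piFinset fun _ : Fin L => {a | ¬ P k a}) := by
          refine card_le_card fun f hf => ?_
          simp only [mem_filter, mem_univ, true_and, not_forall, not_exists] at hf
          obtain ⟨k, hk, hf⟩ := hf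
          exact mem_biUnion.mpr ⟨k, hk, Fintype.mem_piFinset.mpr fun ℓ => by simpa using hf ℓ⟩
      _ ≤ _ := card_biUnion_le.trans (sum_le_sum fun k _ => by simp)
  have htotal : (#{f : Fin L → α | ∀ k ∈ s, ∃ ℓ, P k (f ℓ)} : ℝ) +
      #{f : Fin L → α | ¬ ∀ k ∈ s, ∃ ℓ, P k (f ℓ)} = (Fintype.card α : ℝ) ^ L := by
    rw [← Nat.cast_add, card_filter_add_card_filter_not, card_univ, Fintype.card_fun,
      Fintype.card_fin, Nat.cast_pow]
  have hbadR : (#{f : Fin L → α | ¬ ∀ k ∈ s, ∃ ℓ, P k (f ℓ)} : ℝ) ≤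
      ∑ k ∈ s, (#{a | ¬ P k a} : ℝ) ^ L := by exact_mod_cast hbad
  linarith

theorem Real.two_mul_sq_one_sub_inv_le_log {x : ℝ} (hx : 1 ≤ x) :
    2 * (1 - x⁻¹) ^ 2 ≤ log x := by
  let f : ℝ → ℝ := fun y => log y - 2 * (1 - y⁻¹) ^ 2
  have hf : ∀ y : ℝ, 0 < y → HasDerivAt f ((y - 2) ^ 2 / y ^ 3) y := fun y hy => by
    have := (hasDerivAt_log hy.ne').sub
      (((hasDerivAt_const y (1 : ℝ)).sub (hasDerivAt_inv hy.ne')).pow 2 |>.const_mul 2)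
    refine this.congr_deriv ?_
    simp only [Pi.sub_apply]
    push_cast
    field_simp
    ring
  have hmono : MonotoneOn f (Set.Ici 1) := by
    refine monotoneOn_of_deriv_nonneg (convex_Ici 1) (fun y hy => ?_) (fun y hy => ?_) ?_
    · exact (hf y (by linarith [Set.mem_Ici.mp hy])).continuousAt.continuousWithinAt
    · rw [interior_Ici] at hy
      exact (hf y (by linarith [Set.mem_Ioi.mp hy])).differentiableAt.differentiableWithinAt
    · intro y hy
      rw [interior_Ici] at hy
      have hy0 : 0 < y := by linarith [Set.mem_Ioi.mp hy]
      rw [(hf y hy0).deriv]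
      positivity
  have := hmono (Set.mem_Ici.mpr le_rfl) (Set.mem_Ici.mpr hx) hx
  simp only [f, log_one, inv_one, sub_self] at this
  linarith

theorem natCast_le_mul_pow_of_log_le {n L : ℕ} {c δ : ℝ} (hc : 1 < c) (hδ : 0 < δ)
    (hL : (c / (c - 1)) ^ 2 * (log n - log δ) / 2 ≤ L) : (n : ℝ) ≤ δ * c ^ L := by
  rcases n.eq_zero_or_pos with rfl | hn
  · simp only [Nat.cast_zero]; positivity
  have hc1 : c - 1 ≠ 0 := sub_ne_zero.mpr hc.ne'
  have hq : 1 ≤ (c / (c - 1)) ^ 2 * log c / 2 :=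
    calc (1 : ℝ) = (c / (c - 1)) ^ 2 * (2 * (1 - c⁻¹) ^ 2) / 2 := by field_simp
      _ ≤ _ := by gcongr; exact Real.two_mul_sq_one_sub_inv_le_log hc.le
  have hlog : log n - log δ ≤ L * log c := by
    rcases le_or_gt (log n - log δ) 0 with hD | hD
    · linarith [mul_nonneg (Nat.cast_nonneg L) (log_nonneg hc.le)]
    · calc log n - log δ ≤ (log n - log δ) * ((c / (c - 1)) ^ 2 * log c / 2) :=
            le_mul_of_one_le_right hD.le hq
        _ = (c / (c - 1)) ^ 2 * (log n - log δ) / 2 * log c := by ring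
        _ ≤ L * log c := mul_le_mul_of_nonneg_right hL (log_nonneg hc.le)
  rw [← log_le_log_iff (by positivity) (by positivity), log_mul hδ.ne' (by positivity), log_pow]
  linarith

theorem Real.cos_natCast_mul_arccos_cos (k : ℕ) (θ : ℝ) :
    cos (k * arccos (cos θ)) = cos (k * θ) := by
  have h := Polynomial.Chebyshev.T_real_cos (arccos (cos θ)) k
  rw [cos_arccos (neg_one_le_cos θ) (cos_le_one θ), Polynomial.Chebyshev.T_real_cos] at h
  exact_mod_cast h.symm

theorem ZMod.ofReal_cos_eq_stdAddChar {M : ℕ} [NeZero M] (n : ℤ) :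
    (cos (2 * π * n / M) : ℂ) = (stdAddChar (n : ZMod M) + stdAddChar (-(n : ZMod M))) / 2 := by
  rw [← Int.cast_neg, stdAddChar_coe, stdAddChar_coe, Complex.ofReal_cos, Complex.cos]
  push_cast
  ring_nf

section

variable {d : ℕ}

def signVec (k : Fin d → ℕ) (l : Fin d → Bool) : Fin d → ℤ :=
  fun j => if l j then (k j : ℤ) else -(k j : ℤ)

def latticeVec {M : ℕ} (z : Fin d → Fin M) : Fin d → ℤ := fun i => ((z i : ℕ) : ℤ)

noncomputable def chebWeight (k : Fin d → ℕ) : ℝ := ∏ i, if k i = 0 then 1 else √2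

theorem chebWeight_pos (k : Fin d → ℕ) : 0 < chebWeight k :=
  prod_pos fun i _ => by split_ifs <;> positivity

noncomputable def cosLatticePoint (M : ℕ) (z : Fin d → Fin M) (j : ℕ) : Fin d → ℝ :=
  fun i => cos (2 * π * (j : ℝ) / M * ((z i : ℕ) : ℝ))

theorem signVec_mem_mirror (k : Fin d → ℕ) (l : Fin d → Bool) : signVec k l ∈ mirror k :=
  mem_image_of_mem _ (mem_univ l)

theorem natCast_mem_mirror (k : Fin d → ℕ) : (fun i => (k i : ℤ)) ∈ mirror k :=
  signVec_mem_mirror k fun _ => true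

theorem eq_of_mem_mirror {k k' : Fin d → ℕ} {h : Fin d → ℤ} (hk : h ∈ mirror k)
    (hk' : h ∈ mirror k') : k = k' := by
  have natAbs_eq : ∀ {k}, h ∈ mirror k → ∀ i, (h i).natAbs = k i := by
    intro k hk i
    obtain ⟨l, -, rfl⟩ := mem_image.mp hk
    by_cases hl : l i <;> simp [hl]
  funext i
  rw [← natAbs_eq hk, ← natAbs_eq hk']

theorem mirror_subset_mirrorSet {I : Finset (Fin d → ℕ)} {k : Fin d → ℕ} (hk : k ∈ I) :
    mirror k ⊆ mirrorSet I :=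
  subset_biUnion_of_mem mirror hk

def NonAliasing (I : Finset (Fin d → ℕ)) (M : ℕ) (z : Fin d → Fin M) (k : Fin d → ℕ) :
    Prop :=
  ∀ h ∈ mirrorSet I \ mirror k, ¬ h ⬝ᵥ latticeVec z ≡ (fun i => (k i : ℤ)) ⬝ᵥ latticeVec z [ZMOD M]

theorem card_filter_modEq_dotProduct_mul_le {M : ℕ} (hM : M.Prime) {a b : Fin d → ℤ}
    {i₀ : Fin d} (hab : ¬ a i₀ ≡ b i₀ [ZMOD M]) :
    #{z : Fin d → Fin M | a ⬝ᵥ latticeVec z ≡ b ⬝ᵥ latticeVec z [ZMOD M]} * M ≤ M ^ d := by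
  set S := ({z : Fin d → Fin M | a ⬝ᵥ latticeVec z ≡ b ⬝ᵥ latticeVec z [ZMOD M]} : Finset _)
  -- A solution is determined by its coordinates off `i₀`, since `a i₀ - b i₀` is a unit mod `M`.
  have determined : ∀ z ∈ S, ∀ z' ∈ S, (∀ i ≠ i₀, z i = z' i) → z = z' := by
    intro z hz z' hz' hoff
    have hsingle : latticeVec z - latticeVec z' =
        Pi.single i₀ (latticeVec z i₀ - latticeVec z' i₀) := by
      funext i
      by_cases hi : i = i₀
      · subst hi; simp
      · simp [latticeVec, hoff i hi, hi]
    have hdvd : (M : ℤ) ∣ (b i₀ - a i₀) * (latticeVec z i₀ - latticeVec z' i₀) := by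
      have := dvd_sub (mem_filter.mp hz).2.dvd (mem_filter.mp hz').2.dvd
      rwa [← sub_dotProduct, ← sub_dotProduct, ← dotProduct_sub, hsingle, dotProduct_single] at this
    rcases Int.Prime.dvd_mul' hM hdvd with h | h
    · exact absurd (Int.modEq_iff_dvd.mpr h) hab
    · have hi₀ : z i₀ = z' i₀ := Fin.ext <| Nat.ModEq.eq_of_lt_of_lt
        (Int.natCast_modEq_iff.mp (Int.modEq_iff_dvd.mpr h).symm) (z i₀).2 (z' i₀).2
      funext i
      by_cases hi : i = i₀
      · rw [hi, hi₀]
      · exact hoff i hi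
  calc #S * M = #(S ×ˢ (univ : Finset (Fin M))) := by simp
    _ ≤ #(univ : Finset (Fin d → Fin M)) := by
      refine card_le_card_of_injOn (fun p => Function.update p.1 i₀ p.2) (by simp) ?_
      rintro ⟨z, t⟩ hzt ⟨z', t'⟩ hzt' heq
      simp only [coe_product, Set.mem_prod, mem_coe] at hzt hzt'
      have ht : t = t' := by simpa using congrFun heq i₀
      refine Prod.ext (determined z hzt.1 z' hzt'.1 fun i hi => ?_) ht
      simpa [Function.update_of_ne hi] using congrFun heq i
    _ = M ^ d := by simp

open Classical in
theorem card_filter_not_nonAliasing_mul_le {M : ℕ} (hM : M.Prime) {I : Finset (Fin d → ℕ)}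
    (hinj : Set.InjOn (fun h : Fin d → ℤ => fun i => h i % (M : ℤ)) (mirrorSet I))
    {k : Fin d → ℕ} (hk : k ∈ I) :
    (#{z : Fin d → Fin M | ¬ NonAliasing I M z k} : ℝ) * M ≤ (#(mirrorSet I) - 1) * M ^ d := by
  set kZ : Fin d → ℤ := fun i => (k i : ℤ)
  have hkZ : kZ ∈ mirrorSet I := mirror_subset_mirrorSet hk (natCast_mem_mirror k)
  have hsub : ({z : Fin d → Fin M | ¬ NonAliasing I M z k} : Finset _) ⊆
      (mirrorSet I \ mirror k).biUnion
        fun h => {z | h ⬝ᵥ latticeVec z ≡ kZ ⬝ᵥ latticeVec z [ZMOD M]} := by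
    intro z hz
    simp only [NonAliasing, not_forall, not_not, mem_filter, mem_univ, true_and] at hz
    obtain ⟨h, hh, hmod⟩ := hz
    exact mem_biUnion.mpr ⟨h, hh, mem_filter.mpr ⟨mem_univ _, hmod⟩⟩
  have hfiber : ∀ h ∈ mirrorSet I \ mirror k,
      #{z : Fin d → Fin M | h ⬝ᵥ latticeVec z ≡ kZ ⬝ᵥ latticeVec z [ZMOD M]} * M ≤ M ^ d := by
    intro h hh
    obtain ⟨hhI, hhk⟩ := mem_sdiff.mp hh
    have hne : (fun i => h i % (M : ℤ)) ≠ fun i => kZ i % (M : ℤ) :=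
      fun heq => hhk (hinj hhI hkZ heq ▸ natCast_mem_mirror k)
    obtain ⟨i₀, hi₀⟩ := Function.ne_iff.mp hne
    exact card_filter_modEq_dotProduct_mul_le hM hi₀
  have hcard : (#(mirrorSet I \ mirror k) : ℝ) ≤ #(mirrorSet I) - 1 := by
    have h1 : 1 ≤ #(mirror k) := card_pos.mpr ⟨kZ, natCast_mem_mirror k⟩
    have h2 := card_sdiff_of_subset (mirror_subset_mirrorSet hk)
    have h3 := card_le_card (mirror_subset_mirrorSet hk)
    rw [h2, Nat.cast_sub h3]
    linarith [(Nat.one_le_cast (α := ℝ)).mpr h1]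
  calc (#{z : Fin d → Fin M | ¬ NonAliasing I M z k} : ℝ) * M
      ≤ (∑ h ∈ mirrorSet I \ mirror k,
          #{z : Fin d → Fin M | h ⬝ᵥ latticeVec z ≡ kZ ⬝ᵥ latticeVec z [ZMOD M]} : ℕ) * M := by
        gcongr
        exact (card_le_card hsub).trans card_biUnion_le
    _ ≤ #(mirrorSet I \ mirror k) * M ^ d := by
        rw [Nat.cast_sum, sum_mul]
        exact_mod_cast sum_le_card_nsmul _ _ _ hfiber
    _ ≤ (#(mirrorSet I) - 1) * M ^ d := by gcongr

theorem chebT_cosLatticePoint {M : ℕ} [NeZero M] (k : Fin d → ℕ) (z : Fin d → Fin M)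
    (x : ZMod M) :
    (chebT k (cosLatticePoint M z x.val) : ℂ) = chebWeight k / 2 ^ d *
      ∑ l, ZMod.stdAddChar (x * ((signVec k l ⬝ᵥ latticeVec z : ℤ) : ZMod M)) := by
  have hfactor : ∀ i,
      ((if k i = 0 then 1 else √2 * cos (k i * arccos (cosLatticePoint M z x.val i)) : ℝ) : ℂ) =
        ∑ b : Bool, ((if k i = 0 then 1 else √2 : ℝ) : ℂ) / 2 *
          ZMod.stdAddChar (x * ((signVec k (fun _ => b) i * latticeVec z i : ℤ) : ZMod M)) := by
    intro i
    have hcos : (if k i = 0 then 1 else √2 * cos (k i * arccos (cosLatticePoint M z x.val i)))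
        = (if k i = 0 then 1 else √2) * cos (2 * π * ((k i * x.val * z i : ℕ) : ℤ) / M) := by
      split_ifs with hk
      · simp [hk]
      · rw [cosLatticePoint, Real.cos_natCast_mul_arccos_cos]
        congr 2
        push_cast
        ring
    rw [hcos, Complex.ofReal_mul, ZMod.ofReal_cos_eq_stdAddChar, Fintype.sum_bool]
    simp only [signVec, latticeVec, if_true, Bool.false_eq_true, if_false]
    push_cast
    simp only [ZMod.natCast_val, ZMod.cast_id', id_eq]
    ring_nf
  simp only [chebT, Complex.ofReal_prod, hfactor, Fintype.prod_sum, chebWeight, mul_sum]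
  refine sum_congr rfl fun l _ => ?_
  simp only [dotProduct, Int.cast_sum, mul_sum, AddChar.map_sum_eq_prod, prod_mul_distrib,
    prod_div_distrib, prod_const, card_univ, Fintype.card_fin]
  rfl

theorem sum_chebT_cosLatticePoint_mul_stdAddChar {M : ℕ} [NeZero M] (k : Fin d → ℕ)
    (z : Fin d → Fin M) (m : ZMod M) :
    ∑ x : ZMod M, (chebT k (cosLatticePoint M z x.val) : ℂ) * ZMod.stdAddChar (-(x * m)) =
      ((chebWeight k / 2 ^ d * M *
        #{l | ((signVec k l ⬝ᵥ latticeVec z : ℤ) : ZMod M) = m} : ℝ) : ℂ) := by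
  classical
  have horth : ∀ s : ZMod M,
      ∑ x : ZMod M, ZMod.stdAddChar (x * s) * ZMod.stdAddChar (-(x * m)) =
        if s = m then (M : ℂ) else 0 := by
    intro s
    simp_rw [← AddChar.map_add_eq_mul, ← mul_neg, ← mul_add, ← sub_eq_add_neg,
      AddChar.sum_mulShift _ (ZMod.isPrimitive_stdAddChar M), sub_eq_zero, ZMod.card]
    split_ifs <;> simp
  simp_rw [chebT_cosLatticePoint, mul_assoc, sum_mul, ← mul_sum]
  rw [sum_comm]
  simp only [horth, sum_ite, sum_const_zero, add_zero, sum_const, nsmul_eq_mul]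
  push_cast
  ring

theorem cosLatticePoint_mem_cosLattices {L M : ℕ} (zs : Fin L → Fin d → Fin M) (ℓ : Fin L)
    {j : ℕ} (hj : j < M) : cosLatticePoint M (zs ℓ) j ∈ cosLattices L M zs := by
  simp only [cosLattices, mem_image]
  exact ⟨(ℓ, ⟨j, hj⟩), mem_univ _, rfl⟩

theorem rank_chebMatrix_cosLattices {L M : ℕ} [NeZero M] {I : Finset (Fin d → ℕ)}
    (zs : Fin L → Fin d → Fin M) (h : ∀ k ∈ I, ∃ ℓ, NonAliasing I M (zs ℓ) k) :
    (chebMatrix (cosLattices L M zs) I).rank = #I := by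
  rw [← Fintype.card_coe I]
  refine Matrix.rank_eq_card_of_forall_exists_separating (ι := ZMod M) _ fun k => ?_
  obtain ⟨ℓ, hℓ⟩ := h k.1 k.2
  set m : ZMod M := (((fun i => (k.1 i : ℤ)) ⬝ᵥ latticeVec (zs ℓ) : ℤ) : ZMod M)
  let r : ZMod M → cosLattices L M zs := fun x =>
    ⟨cosLatticePoint M (zs ℓ) x.val, cosLatticePoint_mem_cosLattices zs ℓ (ZMod.val_lt x)⟩
  have coeff : ∀ k' : I, ∑ x : ZMod M, (ZMod.stdAddChar (-(x * m))).re *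
      chebMatrix (cosLattices L M zs) I (r x) k' = chebWeight k'.1 / 2 ^ d * M *
        #{l | ((signVec k'.1 l ⬝ᵥ latticeVec (zs ℓ) : ℤ) : ZMod M) = m} := by
    intro k'
    have := congrArg Complex.re (sum_chebT_cosLatticePoint_mul_stdAddChar k'.1 (zs ℓ) m)
    simp only [Complex.re_sum, Complex.ofReal_re, Complex.re_ofReal_mul] at this
    rw [← this]
    exact sum_congr rfl fun x _ => mul_comm _ _
  -- The all-`true` sign pattern of `k` meets the frequency `m`; by non-aliasing, no sign
  -- pattern of another `k'` does.
  refine ⟨r, fun x => (ZMod.stdAddChar (-(x * m))).re, ?_, fun k' hk' => ?_⟩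
  · rw [coeff]
    have hcount : 0 < #{l | ((signVec k.1 l ⬝ᵥ latticeVec (zs ℓ) : ℤ) : ZMod M) = m} :=
      card_pos.mpr ⟨fun _ => true, mem_filter.mpr ⟨mem_univ _, rfl⟩⟩
    have := chebWeight_pos k.1
    have := NeZero.pos M
    positivity
  · rw [coeff, filter_false_of_mem, card_empty, Nat.cast_zero, mul_zero]
    intro l _ hl
    have hmem : signVec k'.1 l ∈ mirrorSet I \ mirror k.1 :=
      mem_sdiff.mpr ⟨mirror_subset_mirrorSet k'.2 (signVec_mem_mirror _ l),
        fun hmem => hk' (Subtype.ext (eq_of_mem_mirror (signVec_mem_mirror _ l) hmem))⟩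
    exact hℓ _ hmem ((ZMod.intCast_eq_intCast_iff _ _ _).mp hl)

open Classical in
theorem sum_card_filter_not_nonAliasing_pow_le {I : Finset (Fin d → ℕ)} {c δ : ℝ} {L M : ℕ}
    (hc : 1 < c) (hδ : 0 < δ) (hL : (c / (c - 1)) ^ 2 * (log #I - log δ) / 2 ≤ L)
    (hM : M.Prime) (hMc : c * (#(mirrorSet I) - 1) ≤ M)
    (hinj : Set.InjOn (fun h : Fin d → ℤ => fun i => h i % (M : ℤ)) (mirrorSet I)) :
    ∑ k ∈ I, (#{z : Fin d → Fin M | ¬ NonAliasing I M z k} : ℝ) ^ L ≤ δ * ((M : ℝ) ^ d) ^ L := by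
  have hM0 : (0 : ℝ) < M := by exact_mod_cast hM.pos
  have hbad : ∀ k ∈ I, (#{z : Fin d → Fin M | ¬ NonAliasing I M z k} : ℝ) ≤ (M : ℝ) ^ d / c := by
    intro k hk
    rw [le_div_iff₀ (by linarith)]
    refine le_of_mul_le_mul_right ?_ hM0
    calc _ = c * ((#{z : Fin d → Fin M | ¬ NonAliasing I M z k} : ℝ) * M) := by ring
      _ ≤ c * ((#(mirrorSet I) - 1) * M ^ d) :=
        mul_le_mul_of_nonneg_left (card_filter_not_nonAliasing_mul_le hM hinj hk) (by linarith)
      _ ≤ M * M ^ d := by rw [← mul_assoc]; gcongr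
      _ = _ := by ring
  calc _ ≤ ∑ k ∈ I, ((M : ℝ) ^ d / c) ^ L := sum_le_sum fun k hk => by gcongr; exact hbad k hk
    _ = #I * ((M : ℝ) ^ d / c) ^ L := by rw [sum_const, nsmul_eq_mul]
    _ ≤ δ * c ^ L * ((M : ℝ) ^ d / c) ^ L := by
      gcongr
      exact natCast_le_mul_pow_of_log_le hc hδ hL
    _ = δ * ((M : ℝ) ^ d) ^ L := by
      rw [div_pow]
      field_simp

end

/-- Theorem `prob_bound_T_cheb`: under the multiple-lattice construction,
with probability at least `1 - δ` (over the `L` i.i.d. uniform generating vectors) the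
Chebyshev matrix on the union of cosine transformed rank-1 lattices has full column
rank `|I|`. -/
theorem stmt_17 {d : ℕ} (I : Finset (Fin d → ℕ))
    (c δ : ℝ) (hc : 1 < c) (hδ : δ ∈ Set.Ioc (0 : ℝ) 1)
    (L : ℕ) (hL : (c / (c - 1)) ^ 2 * (Real.log I.card - Real.log δ) / 2 ≤ (L : ℝ))
    (M : ℕ) (hM : Nat.Prime M) (hMc : c * ((mirrorSet I).card - 1) ≤ (M : ℝ))
    (hinj : Set.InjOn (fun h : Fin d → ℤ => fun i => h i % (M : ℤ)) (mirrorSet I)) :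
    (1 - δ) * (((M ^ d : ℕ) : ℝ) ^ (L : ℕ)) ≤
      ((Finset.univ.filter fun zs : Fin L → Fin d → Fin M =>
          (chebMatrix (cosLattices L M zs) I).rank = I.card).card : ℝ) := by
  classical
  have : NeZero M := ⟨hM.ne_zero⟩
  have hfail := sum_card_filter_not_nonAliasing_pow_le hc hδ.1 hL hM hMc hinj
  calc (1 - δ) * ((M ^ d : ℕ) : ℝ) ^ L
      ≤ (Fintype.card (Fin d → Fin M) : ℝ) ^ L -
          ∑ k ∈ I, (#{z : Fin d → Fin M | ¬ NonAliasing I M z k} : ℝ) ^ L := by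
        simp only [Fintype.card_fun, Fintype.card_fin, Nat.cast_pow] at hfail ⊢
        linarith
    _ ≤ #{zs : Fin L → Fin d → Fin M | ∀ k ∈ I, ∃ ℓ, NonAliasing I M (zs ℓ) k} :=
        card_pow_sub_sum_le_card_filter_forall_exists I (fun k z => NonAliasing I M z k) L
    _ ≤ _ := by
        exact_mod_cast card_le_card fun zs hzs =>
          mem_filter.mpr ⟨mem_univ _, rank_chebMatrix_cosLattices zs (mem_filter.mp hzs).2⟩
end
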